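/- For every partition λ of n ≥ 0: e_α(λ) = I_λ and e_β(λ) = a(λ)·I_λ, where e_α(λ) (resp. e_β(λ)) denotes the sum over all saturated chains ∅ = λ^{(0)} ⋖ λ^{(1)} ⋖ ⋯ ⋖ λ^{(n)} = λ in Young's lattice of the product of the edge signs s_α (resp. s_β) over the covers of the chain. -/

import Mathlib

open scoped Classical

/-- An integer partition: a weakly decreasing sequence of naturals (rows indexed
from `0`) which is eventually zero. -/
structure YPart where
  part : ℕ → ℕ
  antitone' : Antitone part
  finite' : ∃ N : ℕ, ∀ n : ℕ, N ≤ n → part n = 0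

namespace YPart

/-- Containment of Young diagrams. -/
instance : PartialOrder YPart where
  le p q := ∀ i, p.part i ≤ q.part i
  le_refl p i := le_refl _
  le_trans p q r h h' i := (h i).trans (h' i)
  le_antisymm p q h h' := by
    cases p; cases q
    simp only [mk.injEq]
    funext i
    exact le_antisymm (h i) (h' i)

/-- The empty partition is the minimum of Young's lattice. -/
instance : OrderBot YPart where
  bot := ⟨fun _ => 0, fun _ _ _ => le_refl 0, ⟨0, fun _ _ => rfl⟩⟩
  bot_le p i := Nat.zero_le _

/-- The number of boxes `|λ|`. -/
noncomputable def weight (p : YPart) : ℕ := ∑ᶠ i, p.part i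

/-- `a(λ) = (−1)^{λ₂ + λ₄ + λ₆ + ⋯}` (even-numbered rows in 1-based indexing). -/
noncomputable def aSign (p : YPart) : ℤ := (-1) ^ (∑ᶠ i : ℕ, p.part (2 * i + 1))

lemma conjSet_finite (p : YPart) (j : ℕ) : {i : ℕ | j + 1 ≤ p.part i}.Finite := by
  obtain ⟨N, hN⟩ := p.finite'
  apply Set.Finite.subset (Set.finite_Iio N)
  intro i hi
  simp only [Set.mem_setOf_eq] at hi
  simp only [Set.mem_Iio]
  by_contra h
  push_neg at h
  have := hN i h
  omega

/-- The conjugate partition `λ'`: `λ'_j = #{i : λ_i ≥ j}` (rows indexed from 0). -/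
noncomputable def conj (p : YPart) : YPart where
  part j := {i : ℕ | j + 1 ≤ p.part i}.ncard
  antitone' := by
    intro a b hab
    refine Set.ncard_le_ncard ?_ (conjSet_finite p a)
    intro i hi
    simp only [Set.mem_setOf_eq] at hi ⊢
    omega
  finite' := by
    refine ⟨p.part 0, fun j hj => ?_⟩
    show ({i : ℕ | j + 1 ≤ p.part i}).ncard = 0
    have h : {i : ℕ | j + 1 ≤ p.part i} = ∅ := by
      ext i
      simp only [Set.mem_setOf_eq, Set.mem_empty_iff_false, iff_false, not_le]
      have := p.antitone' (Nat.zero_le i)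
      omega
    rw [h]
    simp

/-- `a'(λ) = a(λ')`. -/
noncomputable def aconj (p : YPart) : ℤ := aSign (conj p)

/-- The (0-based) row index of the box added in a cover `p ⋖ q`: the first
index where the two partitions differ. -/
noncomputable def boxRow (p q : YPart) : ℕ := sInf {i : ℕ | p.part i ≠ q.part i}

/-- `s_α(μ ⋖ λ) = (−1)^{μ₁ + ⋯ + μ_i}` where the added box lies in (1-based) row `i`. -/
noncomputable def salpha (p q : YPart) : ℤ :=
  (-1) ^ (∑ j ∈ Finset.range (boxRow p q + 1), p.part j)

/-- `s_β(μ ⋖ λ) = a(λ) a(μ) s_α(μ ⋖ λ)`. -/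
noncomputable def sbeta (p q : YPart) : ℤ := aSign q * aSign p * salpha p q

end YPart

namespace SDP

variable {P : Type*} [PartialOrder P] [OrderBot P]

/-- The sign of a saturated chain, recorded as a list: the product of the
edge signs `s` over consecutive pairs. -/
def chainSign {α : Type*} (s : α → α → ℤ) : List α → ℤ
  | [] => 1
  | [_] => 1
  | x :: y :: rest => s x y * chainSign s (y :: rest)

/-- Maximal chains from `⊥` to `x`: lists whose consecutive entries are covers,
starting at `⊥` and ending at `x`. -/
def chainsTo (x : P) : Set (List P) :=
  {l : List P | l.Chain' (· ⋖ ·) ∧ l.head? = some (⊥ : P) ∧ l.getLast? = some x}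

/-- `e(x)`: the signed sum of maximal chains from `⊥` to `x`. -/
noncomputable def e (s : P → P → ℤ) (x : P) : ℤ :=
  ∑ᶠ l ∈ chainsTo x, chainSign s l

variable (K : Type*) [Field K]

/-- The up operator on `K̂P`, written coefficientwise:
`(U f)(y) = ∑_{x ⋖ y} s(x ⋖ y) f(x)`. -/
noncomputable def Uop (s : P → P → ℤ) (f : P → K) : P → K :=
  fun y => ∑ᶠ x ∈ {x : P | x ⋖ y}, (s x y : K) * f x

/-- The down operator on `K̂P`, written coefficientwise:
`(D f)(x) = ∑_{y ⋗ x} s(x ⋖ y) v(y) v(x) f(y)`. -/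
noncomputable def Dop (s : P → P → ℤ) (v : P → ℤ) (f : P → K) : P → K :=
  fun x => ∑ᶠ y ∈ {y : P | x ⋖ y}, (s x y : K) * (v y : K) * (v x : K) * f y

end SDP

/-- The number of inversions of a word (list of naturals): pairs of positions
`i < j` with `l_i > l_j`. -/
def wordInversions (l : List ℕ) : ℕ :=
  ((Finset.range l.length ×ˢ Finset.range l.length).filter
    (fun q => q.1 < q.2 ∧ l.getD q.2 0 < l.getD q.1 0)).card

/-- The sign of a word, `(−1)^{#inversions}`; for a word whose letters are a
permutation of `1, …, n` this is the sign of the corresponding permutation. -/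
def wordSign (l : List ℕ) : ℤ := (-1) ^ wordInversions l

namespace YPart

/-- The number of (nonempty) rows of a partition. -/
noncomputable def numRows (p : YPart) : ℕ := sInf {N : ℕ | p.part N = 0}

/-- A standard Young tableau of shape `p` (with `n = |p|`): a filling of the
cells of `p` by `1, …, n` (and `0` outside the diagram), bijective onto
`{1, …, n}`, increasing along rows and down columns. -/
def IsSYT (p : YPart) (t : ℕ → ℕ → ℕ) : Prop :=
  (∀ i j : ℕ, ¬ j < p.part i → t i j = 0) ∧
  (∀ i j : ℕ, j < p.part i → 1 ≤ t i j ∧ t i j ≤ weight p) ∧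
  (∀ m : ℕ, 1 ≤ m → m ≤ weight p →
    ∃! c : ℕ × ℕ, c.2 < p.part c.1 ∧ t c.1 c.2 = m) ∧
  (∀ i j : ℕ, j + 1 < p.part i → t i j < t i (j + 1)) ∧
  (∀ i j : ℕ, j < p.part (i + 1) → t i j < t (i + 1) j)

/-- The (reverse row) reading word of a tableau: read the entries of each row
from right to left, starting with the bottom row and moving up. -/
noncomputable def readingWord (p : YPart) (t : ℕ → ℕ → ℕ) : List ℕ :=
  ((List.range (numRows p)).reverse.map
    (fun i => ((List.range (p.part i)).reverse.map (t i)))).flatten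

/-- The sign imbalance `I_λ = ∑_T s(T)` over all standard Young tableaux of shape `p`. -/
noncomputable def imbalance (p : YPart) : ℤ :=
  ∑ᶠ t ∈ {t : ℕ → ℕ → ℕ | IsSYT p t}, wordSign (readingWord p t)

end YPart


-- ===== auxiliary lemmas =====
namespace YPart

lemma le_iff {p q : YPart} : p ≤ q ↔ ∀ i, p.part i ≤ q.part i := Iff.rfl

@[simp] lemma bot_part (i : ℕ) : (⊥ : YPart).part i = 0 := rfl

lemma eq_iff {p q : YPart} : p = q ↔ ∀ i, p.part i = q.part i := by
  constructor
  · rintro rfl i; rfl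
  · intro h; exact le_antisymm (fun i => (h i).le) (fun i => (h i).ge)

lemma weight_eq_sum (p : YPart) {N : ℕ} (h : ∀ n, N ≤ n → p.part n = 0) :
    weight p = ∑ i ∈ Finset.range N, p.part i := by
  refine finsum_eq_sum_of_support_subset _ ?_
  intro x hx
  simp only [Function.mem_support] at hx
  simp only [Finset.coe_range, Set.mem_Iio]
  by_contra hc
  exact hx (h x (not_lt.mp hc))

@[simp] lemma weight_bot : weight (⊥ : YPart) = 0 := by
  rw [weight_eq_sum (⊥ : YPart) (N := 0) (fun n _ => rfl)]; simp

@[simp] lemma aSign_bot : aSign (⊥ : YPart) = 1 := by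
  unfold aSign
  have : (∑ᶠ i : ℕ, (⊥ : YPart).part (2 * i + 1)) = 0 := by
    simp [bot_part]
  rw [this, pow_zero]

lemma aSign_mul_self (p : YPart) : aSign p * aSign p = 1 := by
  unfold aSign
  rw [← pow_add]
  exact Even.neg_one_pow ⟨_, rfl⟩

lemma weight_pos_of_ne_bot {p : YPart} (h : p ≠ ⊥) : 0 < weight p := by
  obtain ⟨N, hN⟩ := p.finite'
  rw [weight_eq_sum p hN]
  rcases Nat.eq_zero_or_pos (∑ i ∈ Finset.range N, p.part i) with h0 | hpos
  · exfalso
    apply h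
    rw [eq_iff]
    intro i
    simp only [bot_part]
    by_cases hi : i < N
    · have := Finset.sum_eq_zero_iff.mp h0
      exact this i (Finset.mem_range.mpr hi)
    · exact hN i (not_lt.mp hi)
  · exact hpos

lemma eq_bot_of_weight_eq_zero {p : YPart} (h : weight p = 0) : p = ⊥ := by
  by_contra hc
  exact absurd h (Nat.pos_iff_ne_zero.mp (weight_pos_of_ne_bot hc))


/-- Remove the corner box in row `i` (sensible only when row `i` has a corner). -/
noncomputable def erase (p : YPart) (i : ℕ) : YPart where
  part j := if j = i then max (p.part (i + 1)) (p.part i - 1) else p.part j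
  antitone' := by
    intro a b hab
    dsimp only
    rcases eq_or_ne a b with rfl | hne
    · exact le_refl _
    have hab' : a < b := lt_of_le_of_ne hab hne
    by_cases ha : a = i
    · subst ha
      rw [if_pos rfl, if_neg (by omega)]
      exact le_max_of_le_left (p.antitone' (by omega))
    · rw [if_neg ha]
      by_cases hb : b = i
      · subst hb
        rw [if_pos rfl]
        have h1 : p.part b ≤ p.part a := p.antitone' hab
        have h2 : p.part (b + 1) ≤ p.part a := p.antitone' (by omega)
        omega
      · rw [if_neg hb]; exact p.antitone' hab
  finite' := by
    obtain ⟨N, hN⟩ := p.finite'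
    refine ⟨N + i + 1, fun n hn => ?_⟩
    rw [if_neg (show n ≠ i by omega)]
    exact hN n (by omega)

/-- `i` is a corner row of `p`. -/
def IsCorner (p : YPart) (i : ℕ) : Prop := p.part (i + 1) < p.part i

lemma erase_part_self {p : YPart} {i : ℕ} (h : p.IsCorner i) :
    (erase p i).part i = p.part i - 1 := by
  unfold IsCorner at h
  show (if i = i then max (p.part (i+1)) (p.part i - 1) else p.part i) = p.part i - 1
  rw [if_pos rfl]
  omega

lemma erase_part_ne (p : YPart) {i j : ℕ} (h : j ≠ i) :
    (erase p i).part j = p.part j := by simp [erase, h]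

lemma erase_le (p : YPart) (i : ℕ) : erase p i ≤ p := by
  intro j
  by_cases h : j = i
  · subst h
    show (if j = j then max (p.part (j+1)) (p.part j - 1) else p.part j) ≤ p.part j
    rw [if_pos rfl]
    have := p.antitone' (show j ≤ j + 1 by omega)
    omega
  · rw [erase_part_ne p h]

lemma erase_covBy {p : YPart} {i : ℕ} (h : p.IsCorner i) : erase p i ⋖ p := by
  have hlt : erase p i < p := by
    refine lt_of_le_of_ne (erase_le p i) ?_
    intro hc
    have := congrArg (fun q => part q i) hc
    rw [erase_part_self h] at this
    unfold IsCorner at h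
    omega
  refine ⟨hlt, ?_⟩
  intro r h1 h2
  have h1' : ∀ j, (erase p i).part j ≤ r.part j := h1.le
  have h2' : ∀ j, r.part j ≤ p.part j := h2.le
  obtain ⟨j0, hj0⟩ : ∃ j, (erase p i).part j < r.part j := by
    by_contra hc
    push_neg at hc
    exact absurd (le_antisymm (fun j => hc j) (fun j => h1' j)) h1.ne'
  have hji : j0 = i := by
    by_contra hne
    rw [erase_part_ne p hne] at hj0
    exact absurd (h2' j0) (by omega)
  subst hji
  rw [erase_part_self h] at hj0
  have hri : r.part j0 = p.part j0 := by have := h2' j0; omega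
  have : r = p := by
    rw [eq_iff]
    intro j
    by_cases hj : j = j0
    · subst hj; exact hri
    · have := h1' j; rw [erase_part_ne p hj] at this
      exact le_antisymm (h2' j) this
  exact h2.ne this

/-- Characterization of covers in Young's lattice. -/
lemma covBy_iff {q p : YPart} : q ⋖ p ↔ ∃ i, p.IsCorner i ∧ q = erase p i := by
  constructor
  · rintro ⟨hlt, hmax⟩
    have hex : ∃ i, q.part i < p.part i := by
      by_contra hc
      push_neg at hc
      exact hlt.ne (le_antisymm hlt.le fun j => hc j)
    obtain ⟨i, hilt, hmin⟩ : ∃ i, q.part i < p.part i ∧ ∀ j, j < i → q.part j = p.part j :=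
      ⟨Nat.find hex, Nat.find_spec hex,
        fun j hj => le_antisymm (hlt.le j) (not_lt.mp (Nat.find_min hex hj))⟩
    -- construct intermediate r: q with row i set to q.part i + 1
    obtain ⟨r, hrpart⟩ :
        ∃ r : YPart, (∀ j, r.part j = if j = i then q.part i + 1 else q.part j) := by
      refine ⟨⟨fun j => if j = i then q.part i + 1 else q.part j, ?_, ?_⟩, fun j => rfl⟩
      · intro a b hab
        dsimp only
        rcases eq_or_ne a b with rfl | hne
        · exact le_refl _
        have hab' : a < b := lt_of_le_of_ne hab hne
        by_cases ha : a = i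
        · subst ha
          rw [if_pos rfl, if_neg (show b ≠ a by omega)]
          have := q.antitone' (show a ≤ b by omega)
          omega
        · rw [if_neg ha]
          by_cases hb : b = i
          · subst hb
            rw [if_pos rfl]
            have h1 : q.part a = p.part a := hmin a hab'
            have h2 : p.part b ≤ p.part a := p.antitone' hab
            have hilt' : q.part b < p.part b := hilt
            omega
          · rw [if_neg hb]
            exact q.antitone' hab
      · obtain ⟨N, hN⟩ := q.finite'
        obtain ⟨M, hM⟩ := p.finite'
        refine ⟨N + M + i + 1, fun n hn => ?_⟩
        have hni : n ≠ i := by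
          intro hc
          subst hc
          have h0 : p.part n = 0 := hM n (by omega)
          omega
        rw [if_neg hni]
        exact hN n (by omega)
    have hqr : q < r := by
      refine lt_of_le_of_ne (fun j => ?_) ?_
      · rw [hrpart j]
        split
        · next hj => subst hj; omega
        · omega
      · intro hc
        have h2 : q.part i = r.part i := congrArg (fun s => part s i) hc
        rw [hrpart i, if_pos rfl] at h2
        omega
    have hrp : r ≤ p := by
      intro j
      rw [hrpart j]
      split
      · next hj => subst hj; omega
      · exact hlt.le j
    have hrpeq : r = p := by
      by_contra hc
      exact hmax hqr (lt_of_le_of_ne hrp hc)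
    have hpq : ∀ j, p.part j = if j = i then q.part i + 1 else q.part j := by
      intro j
      rw [← hrpeq, hrpart j]
    have hcorner : p.IsCorner i := by
      unfold IsCorner
      rw [hpq (i+1), if_neg (by omega), hpq i, if_pos rfl]
      have : q.part (i+1) ≤ q.part i := q.antitone' (by omega)
      omega
    refine ⟨i, hcorner, ?_⟩
    rw [eq_iff]
    intro j
    by_cases hj : j = i
    · subst hj
      rw [erase_part_self hcorner, hpq j, if_pos rfl]
      omega
    · rw [erase_part_ne p hj, hpq j, if_neg hj]
  · rintro ⟨i, hc, rfl⟩
    exact erase_covBy hc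

end YPart

namespace YPart

lemma numRows_spec (p : YPart) : p.part (numRows p) = 0 := by
  obtain ⟨N, hN⟩ := p.finite'
  exact Nat.sInf_mem (⟨N, hN N (le_refl N)⟩ : {N : ℕ | p.part N = 0}.Nonempty)

lemma part_eq_zero_iff (p : YPart) (j : ℕ) : p.part j = 0 ↔ numRows p ≤ j := by
  constructor
  · intro h
    exact Nat.sInf_le h
  · intro h
    have := p.antitone' h
    have h2 := numRows_spec p
    omega

lemma part_pos_iff (p : YPart) (j : ℕ) : 0 < p.part j ↔ j < numRows p := by
  have := part_eq_zero_iff p j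
  omega

lemma numRows_mono {p q : YPart} (h : p ≤ q) : numRows p ≤ numRows q := by
  rw [← part_eq_zero_iff]
  have h2 : q.part (numRows q) = 0 := numRows_spec q
  have := h (numRows q)
  omega

lemma weight_erase {p : YPart} {i : ℕ} (h : p.IsCorner i) :
    weight (erase p i) + 1 = weight p := by
  obtain ⟨N, hN⟩ := p.finite'
  set M := N + i + 1 with hM
  have hpM : ∀ n, M ≤ n → p.part n = 0 := fun n hn => hN n (by omega)
  have heM : ∀ n, M ≤ n → (erase p i).part n = 0 := fun n hn => by
    rw [erase_part_ne p (show n ≠ i by omega)]; exact hN n (by omega)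
  rw [weight_eq_sum p hpM, weight_eq_sum (erase p i) heM]
  have hiM : i ∈ Finset.range M := Finset.mem_range.mpr (by omega)
  rw [← Finset.add_sum_erase _ _ hiM, ← Finset.add_sum_erase _ _ hiM]
  have hcong : ∑ j ∈ (Finset.range M).erase i, (erase p i).part j
      = ∑ j ∈ (Finset.range M).erase i, p.part j := by
    refine Finset.sum_congr rfl fun j hj => ?_
    exact erase_part_ne p (Finset.ne_of_mem_erase hj)
  rw [hcong, erase_part_self h]
  have : 0 < p.part i := by unfold IsCorner at h; omega
  omega

lemma boxRow_erase {p : YPart} {i : ℕ} (h : p.IsCorner i) :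
    boxRow (erase p i) p = i := by
  unfold boxRow
  have hset : {j : ℕ | (erase p i).part j ≠ p.part j} = {i} := by
    ext j
    simp only [Set.mem_setOf_eq, Set.mem_singleton_iff]
    constructor
    · intro hj
      by_contra hc
      exact hj (erase_part_ne p hc)
    · rintro rfl
      rw [erase_part_self h]
      unfold IsCorner at h
      omega
  rw [hset]
  exact csInf_singleton i

lemma salpha_erase {p : YPart} {i : ℕ} (h : p.IsCorner i) :
    salpha (erase p i) p = (-1) ^ (∑ j ∈ Finset.range (i + 1), (erase p i).part j) := by
  unfold salpha
  rw [boxRow_erase h]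

lemma corners_finite (p : YPart) : {i | p.IsCorner i}.Finite := by
  obtain ⟨N, hN⟩ := p.finite'
  apply Set.Finite.subset (Set.finite_Iio N)
  intro i hi
  simp only [Set.mem_setOf_eq, IsCorner] at hi
  simp only [Set.mem_Iio]
  by_contra hc
  push_neg at hc
  have := hN i hc
  omega

/-- The corner rows of `p`, as a `Finset`. -/
noncomputable def corners (p : YPart) : Finset ℕ := (corners_finite p).toFinset

lemma mem_corners {p : YPart} {i : ℕ} : i ∈ corners p ↔ p.IsCorner i := by
  simp [corners, Set.Finite.mem_toFinset]

lemma corners_nonempty {p : YPart} (h : p ≠ ⊥) : ∃ i, p.IsCorner i := by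
  -- the last nonzero row is a corner
  have h0 : 0 < numRows p := by
    rw [← part_pos_iff]
    by_contra hc
    apply h
    rw [eq_iff]
    intro i
    have := p.antitone' (Nat.zero_le i)
    simp only [bot_part]
    omega
  refine ⟨numRows p - 1, ?_⟩
  unfold IsCorner
  have h1 : 0 < p.part (numRows p - 1) := (part_pos_iff p _).mpr (by omega)
  have h2 : p.part (numRows p - 1 + 1) = 0 := by
    rw [part_eq_zero_iff]; omega
  omega

end YPart
section Chunk4
open YPart

lemma head?_concat' {α : Type*} (m : List α) (hm : m ≠ []) (x : α) :
    (m ++ [x]).head? = m.head? := by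
  cases m with
  | nil => exact absurd rfl hm
  | cons a t => rfl

namespace SDP

lemma chainSign_concat {α : Type*} (s : α → α → ℤ) :
    ∀ (l : List α) (hl : l ≠ []) (x : α),
      chainSign s (l ++ [x]) = chainSign s l * s (l.getLast hl) x
  | [], hl, x => absurd rfl hl
  | [a], _, x => by simp [chainSign]
  | a :: b :: t, _, x => by
    have ih := chainSign_concat s (b :: t) (by simp) x
    show s a b * chainSign s ((b :: t) ++ [x]) = _
    rw [ih, List.getLast_cons (by simp : (b : α) :: t ≠ [])]
    show _ = s a b * chainSign s (b :: t) * _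
    ring

lemma chainSign_sbeta : ∀ (l : List YPart) (x z : YPart),
    l.head? = some x → l.getLast? = some z →
      chainSign YPart.sbeta l = YPart.aSign z * YPart.aSign x * chainSign YPart.salpha l
  | [], x, z, hh, _ => by simp at hh
  | [a], x, z, hh, hl => by
    have hx : a = x := by simpa using hh
    have hz : a = z := by simpa using hl
    subst hx; subst hz
    show (1 : ℤ) = aSign a * aSign a * 1
    rw [aSign_mul_self, one_mul]
  | a :: b :: t, x, z, hh, hl => by
    have hx : a = x := by simpa using hh
    subst hx
    have hl' : (b :: t).getLast? = some z := by rw [← hl]; rfl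
    have ih := chainSign_sbeta (b :: t) b z rfl hl'
    show sbeta a b * chainSign sbeta (b :: t) = _
    rw [ih]
    show _ = aSign z * aSign a * (salpha a b * chainSign salpha (b :: t))
    unfold sbeta
    have hbb := aSign_mul_self b
    linear_combination (aSign a * salpha a b * aSign z * chainSign salpha (b :: t)) * hbb

lemma mem_chainsTo_iff {p : YPart} (hp : p ≠ ⊥) (l : List YPart) :
    l ∈ chainsTo p ↔
      ∃ i, p.IsCorner i ∧ ∃ l' ∈ chainsTo (YPart.erase p i), l = l' ++ [p] := by
  constructor
  · rintro ⟨hchain, hhead, hlast⟩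
    have hne : l ≠ [] := by rintro rfl; simp at hhead
    have hl2 : l.getLast hne = p := by
      rw [List.getLast?_eq_getLast hne] at hlast
      injection hlast
    have hdecomp : l = l.dropLast ++ [p] := by
      conv_lhs => rw [← List.dropLast_append_getLast hne]
      rw [hl2]
    have hdne : l.dropLast ≠ [] := by
      intro hc
      rw [hdecomp, hc, List.nil_append] at hhead
      simp only [List.head?_cons, Option.some.injEq] at hhead
      exact hp hhead
    unfold List.Chain' at hchain
    rw [hdecomp, List.isChain_append] at hchain
    obtain ⟨hc1, _, hc3⟩ := hchain
    have hμlast := List.getLast?_eq_getLast hdne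
    have hcov : l.dropLast.getLast hdne ⋖ p := hc3 _ (by rw [hμlast]; rfl) p rfl
    obtain ⟨i, hcor, hμ⟩ := covBy_iff.mp hcov
    refine ⟨i, hcor, l.dropLast, ⟨hc1, ?_, ?_⟩, hdecomp⟩
    · rw [← hhead]
      conv_rhs => rw [hdecomp]
      rw [head?_concat' _ hdne]
    · rw [hμlast, hμ]
  · rintro ⟨i, hcor, l', ⟨hc1, hh1, hl1⟩, rfl⟩
    refine ⟨?_, ?_, ?_⟩
    · unfold List.Chain'
      rw [List.isChain_append]
      refine ⟨hc1, List.isChain_singleton p, ?_⟩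
      intro x hx y hy
      simp only [List.head?_cons, Option.mem_def, Option.some.injEq] at hy
      subst hy
      rw [hl1] at hx
      simp only [Option.mem_def, Option.some.injEq] at hx
      subst hx
      exact erase_covBy hcor
    · have hne : l' ≠ [] := by rintro rfl; simp at hh1
      rw [head?_concat' _ hne]
      exact hh1
    · exact List.getLast?_concat

lemma chainsTo_bot : chainsTo (⊥ : YPart) = {[(⊥ : YPart)]} := by
  ext l
  constructor
  · rintro ⟨hchain, hhead, hlast⟩
    cases l with
    | nil => simp at hhead
    | cons a t =>
      simp only [List.head?_cons, Option.some.injEq] at hhead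
      cases t with
      | nil => subst hhead; rfl
      | cons b t2 =>
        exfalso
        have hlt : List.Chain' (· < ·) (a :: b :: t2) := hchain.imp (fun _ _ h => h.1)
        unfold List.Chain' at hlt
        rw [List.isChain_iff_pairwise] at hlt
        have h1 : ∀ y ∈ b :: t2, a < y := fun y hy => List.rel_of_pairwise_cons hlt hy
        have hne : (b :: t2) ≠ [] := by simp
        have h2 : a < (b :: t2).getLast hne := h1 _ (List.getLast_mem hne)
        have h3 : (a :: b :: t2).getLast? = some ((b :: t2).getLast hne) := by
          rw [show (a :: b :: t2).getLast? = (b :: t2).getLast? from rfl,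
            List.getLast?_eq_getLast hne]
        rw [h3] at hlast
        injection hlast with hlast
        rw [hlast, hhead] at h2
        exact lt_irrefl _ h2
  · rintro rfl
    exact ⟨List.isChain_singleton _, rfl, rfl⟩

lemma chainsTo_finite_aux : ∀ (n : ℕ) (p : YPart), weight p = n → (chainsTo p).Finite := by
  intro n
  induction n using Nat.strong_induction_on with
  | _ n ih =>
    intro p hw
    by_cases hp : p = ⊥
    · subst hp
      rw [chainsTo_bot]
      exact Set.finite_singleton _
    · have hsub : chainsTo p ⊆
          ⋃ i ∈ {i | p.IsCorner i}, (fun l => l ++ [p]) '' chainsTo (YPart.erase p i) := by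
        intro l hl
        obtain ⟨i, hcor, l', hl', rfl⟩ := (mem_chainsTo_iff hp l).mp hl
        exact Set.mem_biUnion hcor ⟨l', hl', rfl⟩
      refine Set.Finite.subset (Set.Finite.biUnion (corners_finite p) ?_) hsub
      intro i hi
      refine Set.Finite.image _ (ih (weight (YPart.erase p i)) ?_ _ rfl)
      have := weight_erase hi
      omega

lemma chainsTo_finite (p : YPart) : (chainsTo p).Finite := chainsTo_finite_aux (weight p) p rfl

lemma e_bot (s : YPart → YPart → ℤ) : e s (⊥ : YPart) = 1 := by
  unfold e
  rw [chainsTo_bot, finsum_mem_singleton]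
  rfl

lemma e_rec (s : YPart → YPart → ℤ) {p : YPart} (hp : p ≠ ⊥) :
    e s p = ∑ i ∈ corners p, s (YPart.erase p i) p * e s (YPart.erase p i) := by
  unfold e
  rw [finsum_mem_eq_finite_toFinset_sum _ (chainsTo_finite p)]
  have step : ∑ l ∈ (chainsTo_finite p).toFinset, chainSign s l
      = ∑ q ∈ (corners p).sigma (fun i => (chainsTo_finite (YPart.erase p i)).toFinset),
          s (YPart.erase p q.1) p * chainSign s q.2 := by
    refine Finset.sum_nbij'
      (i := fun l => (⟨boxRow ((l.dropLast.getLast?).getD ⊥) p, l.dropLast⟩ :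
        Σ _ : ℕ, List YPart))
      (j := fun q => q.2 ++ [p]) ?_ ?_ ?_ ?_ ?_
    · intro l hl
      rw [Set.Finite.mem_toFinset] at hl
      obtain ⟨i, hcor, l', hl', rfl⟩ := (mem_chainsTo_iff hp l).mp hl
      rw [List.dropLast_concat]
      have hlast : l'.getLast? = some (YPart.erase p i) := hl'.2.2
      rw [hlast]
      simp only [Option.getD_some]
      rw [boxRow_erase hcor, Finset.mem_sigma]
      exact ⟨mem_corners.mpr hcor, (Set.Finite.mem_toFinset _).mpr hl'⟩
    · intro q hq
      rw [Finset.mem_sigma] at hq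
      rw [Set.Finite.mem_toFinset, mem_chainsTo_iff hp]
      exact ⟨q.1, mem_corners.mp hq.1, q.2, (Set.Finite.mem_toFinset _).mp hq.2, rfl⟩
    · intro l hl
      rw [Set.Finite.mem_toFinset] at hl
      obtain ⟨i, hcor, l', hl', rfl⟩ := (mem_chainsTo_iff hp l).mp hl
      simp only [List.dropLast_concat]
    · intro q hq
      rw [Finset.mem_sigma] at hq
      obtain ⟨i, l'⟩ := q
      simp only [List.dropLast_concat]
      have hlast : l'.getLast? = some (YPart.erase p i) :=
        ((Set.Finite.mem_toFinset _).mp hq.2).2.2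
      rw [hlast]
      simp only [Option.getD_some]
      rw [boxRow_erase (mem_corners.mp hq.1)]
    · intro l hl
      rw [Set.Finite.mem_toFinset] at hl
      obtain ⟨i, hcor, l', hl', rfl⟩ := (mem_chainsTo_iff hp l).mp hl
      have hne : l' ≠ [] := by rintro rfl; simpa using hl'.2.1
      have hlast : l'.getLast? = some (YPart.erase p i) := hl'.2.2
      have hgl : l'.getLast hne = YPart.erase p i := by
        rw [List.getLast?_eq_getLast hne] at hlast
        injection hlast
      dsimp only
      rw [chainSign_concat s l' hne p, hgl, List.dropLast_concat, hlast]
      simp only [Option.getD_some]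
      rw [boxRow_erase hcor]
      ring
  rw [step, Finset.sum_sigma]
  refine Finset.sum_congr rfl fun i hi => ?_
  rw [finsum_mem_eq_finite_toFinset_sum _ (chainsTo_finite (YPart.erase p i)),
    Finset.mul_sum]

lemma e_sbeta (p : YPart) : e YPart.sbeta p = YPart.aSign p * e YPart.salpha p := by
  unfold e
  rw [finsum_mem_eq_finite_toFinset_sum _ (chainsTo_finite p),
    finsum_mem_eq_finite_toFinset_sum _ (chainsTo_finite p), Finset.mul_sum]
  refine Finset.sum_congr rfl fun l hl => ?_
  rw [Set.Finite.mem_toFinset] at hl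
  rw [chainSign_sbeta l ⊥ p hl.2.1 hl.2.2, aSign_bot, mul_one]

end SDP
end Chunk4
section Chunk5

lemma list_sum_range_eq (n : ℕ) (f : ℕ → ℕ) :
    ((List.range n).map f).sum = ∑ i ∈ Finset.range n, f i := by
  induction n with
  | zero => simp
  | succ k ih =>
    rw [List.range_succ, Finset.sum_range_succ, List.map_append, List.sum_append, ih]
    simp

/-- Inserting a strictly largest letter with `b` letters after it adds `b` inversions. -/
lemma wordInversions_insert (A B : List ℕ) (m : ℕ)
    (hA : ∀ x ∈ A, x < m) (hB : ∀ x ∈ B, x < m) :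
    wordInversions (A ++ m :: B) = wordInversions (A ++ B) + B.length := by
  classical
  set a := A.length with ha
  set b := B.length with hb
  set l := A ++ m :: B with hldef
  set l' := A ++ B with hl'def
  have hlen : l.length = a + b + 1 := by simp [hldef, ha, hb]; omega
  have hlen' : l'.length = a + b := by simp [hl'def, ha, hb]
  -- getD facts
  have g1 : ∀ k, k < a → l.getD k 0 = A.getD k 0 := fun k hk =>
    List.getD_append _ _ _ _ hk
  have g2 : l.getD a 0 = m := by
    rw [hldef, List.getD_append_right _ _ _ _ (le_refl a)]
    simp [ha]
  have g3 : ∀ k, a < k → l.getD k 0 = B.getD (k - a - 1) 0 := by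
    intro k hk
    rw [hldef, List.getD_append_right _ _ _ _ (by omega : A.length ≤ k)]
    have : k - A.length = (k - a - 1) + 1 := by omega
    rw [this]
    rfl
  have g1' : ∀ k, k < a → l'.getD k 0 = A.getD k 0 := fun k hk =>
    List.getD_append _ _ _ _ hk
  have g3' : ∀ k, a ≤ k → l'.getD k 0 = B.getD (k - a) 0 := by
    intro k hk
    rw [hl'def, List.getD_append_right _ _ _ _ (by omega : A.length ≤ k)]
  have hAlt : ∀ k, k < a → A.getD k 0 < m := fun k hk => hA _ (by
    rw [List.getD_eq_getElem A 0 (by omega)]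
    exact List.getElem_mem _)
  have hBlt : ∀ k, k < b → B.getD k 0 < m := fun k hk => hB _ (by
    rw [List.getD_eq_getElem B 0 (by omega)]
    exact List.getElem_mem _)
  have hshift : ∀ k, k < a + b →
      l.getD (if k < a then k else k + 1) 0 = l'.getD k 0 := by
    intro k hk
    by_cases h : k < a
    · rw [if_pos h, g1 k h, g1' k h]
    · rw [if_neg h, g3 (k+1) (by omega), g3' k (by omega)]
      congr 1
      omega
  unfold wordInversions
  rw [hlen, hlen']
  set D := Finset.range (a+b+1) ×ˢ Finset.range (a+b+1) with hD
  set P : ℕ × ℕ → Prop := fun q => q.1 < q.2 ∧ l.getD q.2 0 < l.getD q.1 0 with hP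
  set S := D.filter P with hS
  have hsplit := Finset.card_filter_add_card_filter_not
    (s := S) (fun q : ℕ × ℕ => q.1 = a ∨ q.2 = a)
  -- the part touching index a has cardinality b
  have hX : (S.filter (fun q : ℕ × ℕ => q.1 = a ∨ q.2 = a)).card = b := by
    have heq : S.filter (fun q : ℕ × ℕ => q.1 = a ∨ q.2 = a)
        = Finset.image (fun j => (a, j)) (Finset.Ico (a+1) (a+b+1)) := by
      ext q
      simp only [Finset.mem_filter, Finset.mem_image, Finset.mem_Ico, hS, hD, hP,
        Finset.mem_product, Finset.mem_range]
      constructor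
      · rintro ⟨⟨⟨hq1, hq2⟩, hlt, hval⟩, hor⟩
        rcases hor with h1 | h2
        · exact ⟨q.2, ⟨by omega, hq2⟩, by rw [← h1]⟩
        · exfalso
          rw [h2, g2] at hval
          have : q.1 < a := by omega
          rw [g1 q.1 this] at hval
          exact absurd hval (by have := hAlt q.1 this; omega)
      · rintro ⟨j, ⟨hj1, hj2⟩, rfl⟩
        refine ⟨⟨⟨by omega, hj2⟩, by omega, ?_⟩, Or.inl rfl⟩
        rw [g2, g3 j (by omega)]
        exact hBlt _ (by omega)
    rw [heq, Finset.card_image_of_injective _ (fun x y hxy => by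
      simpa using hxy), Nat.card_Ico]
    omega
  -- the part avoiding index a is in bijection with inversions of l'
  have hY : (S.filter (fun q : ℕ × ℕ => ¬(q.1 = a ∨ q.2 = a))).card
      = ((Finset.range (a+b) ×ˢ Finset.range (a+b)).filter
          (fun q : ℕ × ℕ => q.1 < q.2 ∧ l'.getD q.2 0 < l'.getD q.1 0)).card := by
    refine (Finset.card_nbij'
      (i := fun q : ℕ × ℕ => ((if q.1 < a then q.1 else q.1 - 1),
        (if q.2 < a then q.2 else q.2 - 1)))
      (j := fun q : ℕ × ℕ => ((if q.1 < a then q.1 else q.1 + 1),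
        (if q.2 < a then q.2 else q.2 + 1))) ?_ ?_ ?_ ?_).symm.symm
    · -- maps filtered S into target
      intro q hq
      simp only [Finset.mem_coe, Finset.mem_filter, hS, hD, hP, Finset.mem_product, Finset.mem_range] at hq ⊢
      obtain ⟨⟨⟨hq1, hq2⟩, hlt, hval⟩, hne⟩ := hq
      push_neg at hne
      obtain ⟨hne1, hne2⟩ := hne
      have e1 : l.getD q.1 0 = l'.getD (if q.1 < a then q.1 else q.1 - 1) 0 := by
        by_cases h : q.1 < a
        · rw [if_pos h, g1 _ h, g1' _ h]
        · rw [if_neg h, g3 _ (by omega), g3' _ (by omega)]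
          congr 1
          omega
      have e2 : l.getD q.2 0 = l'.getD (if q.2 < a then q.2 else q.2 - 1) 0 := by
        by_cases h : q.2 < a
        · rw [if_pos h, g1 _ h, g1' _ h]
        · rw [if_neg h, g3 _ (by omega), g3' _ (by omega)]
          congr 1
          omega
      refine ⟨⟨?_, ?_⟩, ?_, ?_⟩
      · split <;> omega
      · split <;> omega
      · split <;> split <;> omega
      · rw [← e1, ← e2]; exact hval
    · -- maps target into filtered S
      intro q hq
      simp only [Finset.mem_coe, Finset.mem_filter, hS, hD, hP, Finset.mem_product, Finset.mem_range] at hq ⊢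
      obtain ⟨⟨hq1, hq2⟩, hlt, hval⟩ := hq
      have e1 : l.getD (if q.1 < a then q.1 else q.1 + 1) 0 = l'.getD q.1 0 :=
        hshift q.1 (by omega)
      have e2 : l.getD (if q.2 < a then q.2 else q.2 + 1) 0 = l'.getD q.2 0 :=
        hshift q.2 (by omega)
      refine ⟨⟨⟨?_, ?_⟩, ?_, ?_⟩, ?_⟩
      · split <;> omega
      · split <;> omega
      · split <;> split <;> omega
      · rw [e1, e2]; exact hval
      · push_neg
        constructor
        · split <;> omega
        · split <;> omega
    · -- left inverse
      intro q hq
      simp only [Finset.mem_coe, Finset.mem_filter, hS, hD, hP, Finset.mem_product, Finset.mem_range] at hq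
      obtain ⟨⟨⟨hq1, hq2⟩, hlt, hval⟩, hne⟩ := hq
      push_neg at hne
      obtain ⟨hne1, hne2⟩ := hne
      have : q = (q.1, q.2) := rfl
      rw [this]
      dsimp only
      simp only [Prod.mk.injEq]
      constructor <;> (split_ifs <;> omega)
    · -- right inverse
      intro q hq
      simp only [Finset.mem_coe, Finset.mem_filter, Finset.mem_product, Finset.mem_range] at hq
      obtain ⟨⟨hq1, hq2⟩, hlt, hval⟩ := hq
      have : q = (q.1, q.2) := rfl
      rw [this]
      dsimp only
      simp only [Prod.mk.injEq]
      constructor <;> (split_ifs <;> omega)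
  omega

lemma wordSign_insert (A B : List ℕ) (m : ℕ)
    (hA : ∀ x ∈ A, x < m) (hB : ∀ x ∈ B, x < m) :
    wordSign (A ++ m :: B) = (-1) ^ B.length * wordSign (A ++ B) := by
  unfold wordSign
  rw [wordInversions_insert A B m hA hB, pow_add]
  ring

end Chunk5
section Chunk6
namespace YPart

lemma ne_bot_of_corner {p : YPart} {i : ℕ} (h : p.IsCorner i) : p ≠ ⊥ := by
  intro hc
  unfold IsCorner at h
  rw [hc] at h
  simp at h

lemma exists_max_cell {p : YPart} {t : ℕ → ℕ → ℕ} (h : IsSYT p t) (hp : p ≠ ⊥) :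
    ∃ c : ℕ × ℕ, c.2 < p.part c.1 ∧ t c.1 c.2 = weight p := by
  obtain ⟨c, hc, -⟩ := h.2.2.1 (weight p) (weight_pos_of_ne_bot hp) (le_refl _)
  exact ⟨c, hc⟩

lemma max_cell_corner {p : YPart} {t : ℕ → ℕ → ℕ} (h : IsSYT p t) {a b : ℕ}
    (hb : b < p.part a) (hv : t a b = weight p) :
    b = p.part a - 1 ∧ p.IsCorner a := by
  obtain ⟨h0, hbd, hun, hrow, hcol⟩ := h
  constructor
  · by_contra hc
    have hb1 : b + 1 < p.part a := by omega
    have := hrow a b hb1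
    have := (hbd a (b+1) hb1).2
    omega
  · unfold IsCorner
    by_contra hc
    push_neg at hc
    have hb2 : b < p.part (a+1) := by omega
    have := hcol a b hb2
    have := (hbd (a+1) b hb2).2
    omega

noncomputable def maxCell (p : YPart) (t : ℕ → ℕ → ℕ) : ℕ × ℕ :=
  if h : ∃ c : ℕ × ℕ, c.2 < p.part c.1 ∧ t c.1 c.2 = weight p then Classical.choose h
  else (0, 0)

lemma maxCell_spec {p : YPart} {t : ℕ → ℕ → ℕ} (h : IsSYT p t) (hp : p ≠ ⊥) :
    (maxCell p t).2 < p.part (maxCell p t).1 ∧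
      t (maxCell p t).1 (maxCell p t).2 = weight p := by
  unfold maxCell
  rw [dif_pos (exists_max_cell h hp)]
  exact Classical.choose_spec (exists_max_cell h hp)

lemma maxCell_unique {p : YPart} {t : ℕ → ℕ → ℕ} (h : IsSYT p t) (hp : p ≠ ⊥) {a b : ℕ}
    (hb : b < p.part a) (hv : t a b = weight p) : (a, b) = maxCell p t :=
  ExistsUnique.unique (h.2.2.1 (weight p) (weight_pos_of_ne_bot hp) (le_refl _))
    ⟨hb, hv⟩ (maxCell_spec h hp)

lemma maxCell_snd {p : YPart} {t : ℕ → ℕ → ℕ} (h : IsSYT p t) (hp : p ≠ ⊥) :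
    (maxCell p t).2 = p.part (maxCell p t).1 - 1 ∧ p.IsCorner (maxCell p t).1 :=
  max_cell_corner h (maxCell_spec h hp).1 (maxCell_spec h hp).2

lemma maxCell_val {p : YPart} {t : ℕ → ℕ → ℕ} (h : IsSYT p t) (hp : p ≠ ⊥) :
    t (maxCell p t).1 (p.part (maxCell p t).1 - 1) = weight p := by
  have h1 := (maxCell_spec h hp).2
  rw [(maxCell_snd h hp).1] at h1
  exact h1

noncomputable def removeMax (p : YPart) (t : ℕ → ℕ → ℕ) : ℕ → ℕ → ℕ :=
  fun a b => if a = (maxCell p t).1 ∧ b = p.part (maxCell p t).1 - 1 then 0 else t a b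

noncomputable def insertMax (p : YPart) (i : ℕ) (t' : ℕ → ℕ → ℕ) : ℕ → ℕ → ℕ :=
  fun a b => if a = i ∧ b = p.part i - 1 then weight p else t' a b

lemma erase_cell_iff {p : YPart} {i0 : ℕ} (hcor : p.IsCorner i0) (a b : ℕ) :
    b < (erase p i0).part a ↔ b < p.part a ∧ ¬(a = i0 ∧ b = p.part i0 - 1) := by
  have hc := hcor
  unfold IsCorner at hc
  by_cases ha : a = i0
  · subst ha
    rw [erase_part_self hcor]
    omega
  · rw [erase_part_ne p ha]
    have hna : ¬(a = i0 ∧ b = p.part i0 - 1) := fun hcc => ha hcc.1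
    tauto

lemma isSYT_removeMax {p : YPart} {t : ℕ → ℕ → ℕ} (h : IsSYT p t) (hp : p ≠ ⊥) :
    IsSYT (erase p (maxCell p t).1) (removeMax p t) := by
  obtain ⟨hsnd, hcor⟩ := maxCell_snd h hp
  have hmv := maxCell_val h hp
  set i0 := (maxCell p t).1 with hi0
  have hn : weight (erase p i0) + 1 = weight p := weight_erase hcor
  have hcell := erase_cell_iff hcor
  obtain ⟨h0, hbd, hun, hrow, hcol⟩ := h
  have hsyt : IsSYT p t := ⟨h0, hbd, hun, hrow, hcol⟩
  have htt' : ∀ a b, b < (erase p i0).part a → removeMax p t a b = t a b := by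
    intro a b hb
    unfold removeMax
    rw [if_neg ((hcell a b).mp hb).2]
  refine ⟨?_, ?_, ?_, ?_, ?_⟩
  · intro a b hb
    unfold removeMax
    by_cases hc : a = i0 ∧ b = p.part i0 - 1
    · rw [if_pos hc]
    · rw [if_neg hc]
      apply h0
      intro hbp
      exact hb ((hcell a b).mpr ⟨hbp, hc⟩)
  · intro a b hb
    rw [htt' a b hb]
    have hbp : b < p.part a := lt_of_lt_of_le hb (erase_le p i0 a)
    have h1 := hbd a b hbp
    have hne : t a b ≠ weight p := by
      intro hcv
      have heq := maxCell_unique hsyt hp hbp hcv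
      have ha : a = i0 := congrArg Prod.fst heq
      have hbb : b = (maxCell p t).2 := congrArg Prod.snd heq
      rw [hsnd] at hbb
      exact ((hcell a b).mp hb).2 ⟨ha, hbb⟩
    omega
  · intro m hm1 hm2
    have hm2' : m ≤ weight p := by omega
    obtain ⟨c, ⟨hc1, hc2⟩, hcu⟩ := hun m hm1 hm2'
    have hcne : ¬(c.1 = i0 ∧ c.2 = p.part i0 - 1) := by
      intro hcc
      rw [hcc.1, hcc.2, hmv] at hc2
      omega
    have hcμ : c.2 < (erase p i0).part c.1 := (hcell c.1 c.2).mpr ⟨hc1, hcne⟩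
    refine ⟨c, ⟨hcμ, by rw [htt' _ _ hcμ]; exact hc2⟩, ?_⟩
    rintro d ⟨hd1, hd2⟩
    rw [htt' _ _ hd1] at hd2
    exact hcu d ⟨((hcell d.1 d.2).mp hd1).1, hd2⟩
  · intro a b hb
    have hba : b < (erase p i0).part a := by omega
    rw [htt' a b hba, htt' a (b+1) hb]
    exact hrow a b (lt_of_lt_of_le hb (erase_le p i0 a))
  · intro a b hb
    have hba : b < (erase p i0).part a := lt_of_lt_of_le hb ((erase p i0).antitone' (by omega))
    rw [htt' a b hba, htt' (a+1) b hb]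
    exact hcol a b (lt_of_lt_of_le hb (erase_le p i0 (a+1)))

lemma isSYT_insertMax {p : YPart} {i0 : ℕ} (hcor : p.IsCorner i0) {t' : ℕ → ℕ → ℕ}
    (h : IsSYT (erase p i0) t') : IsSYT p (insertMax p i0 t') := by
  have hc' := hcor
  unfold IsCorner at hc'
  have hn : weight (erase p i0) + 1 = weight p := weight_erase hcor
  have hcell := erase_cell_iff hcor
  obtain ⟨h0, hbd, hun, hrow, hcol⟩ := h
  have htt' : ∀ a b, b < (erase p i0).part a → insertMax p i0 t' a b = t' a b := by
    intro a b hb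
    unfold insertMax
    rw [if_neg ((hcell a b).mp hb).2]
  refine ⟨?_, ?_, ?_, ?_, ?_⟩
  · intro a b hb
    unfold insertMax
    rw [if_neg (by intro hcc; apply hb; rw [hcc.1, hcc.2]; omega)]
    apply h0
    intro hbc
    exact hb (lt_of_lt_of_le hbc (erase_le p i0 a))
  · intro a b hb
    unfold insertMax
    by_cases hcc : a = i0 ∧ b = p.part i0 - 1
    · rw [if_pos hcc]
      omega
    · rw [if_neg hcc]
      have hbμ : b < (erase p i0).part a := (hcell a b).mpr ⟨hb, hcc⟩
      have := hbd a b hbμ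
      omega
  · intro m hm1 hm2
    by_cases hm : m = weight p
    · subst hm
      refine ⟨(i0, p.part i0 - 1), ⟨by show p.part i0 - 1 < p.part i0; omega, ?_⟩, ?_⟩
      · show insertMax p i0 t' i0 (p.part i0 - 1) = weight p
        unfold insertMax
        rw [if_pos ⟨rfl, rfl⟩]
      · rintro d ⟨hd1, hd2⟩
        by_cases hdc : d.1 = i0 ∧ d.2 = p.part i0 - 1
        · exact Prod.ext hdc.1 hdc.2
        · exfalso
          unfold insertMax at hd2
          rw [if_neg hdc] at hd2
          have := hbd d.1 d.2 ((hcell d.1 d.2).mpr ⟨hd1, hdc⟩)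
          omega
    · have hm2' : m ≤ weight (erase p i0) := by omega
      obtain ⟨c, ⟨hc1, hc2⟩, hcu⟩ := hun m hm1 hm2'
      refine ⟨c, ⟨lt_of_lt_of_le hc1 (erase_le p i0 c.1),
        by rw [htt' _ _ hc1]; exact hc2⟩, ?_⟩
      rintro d ⟨hd1, hd2⟩
      have hdc : ¬(d.1 = i0 ∧ d.2 = p.part i0 - 1) := by
        intro hdd
        unfold insertMax at hd2
        rw [if_pos hdd] at hd2
        exact hm hd2.symm
      have hdμ : d.2 < (erase p i0).part d.1 := (hcell d.1 d.2).mpr ⟨hd1, hdc⟩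
      rw [htt' _ _ hdμ] at hd2
      exact hcu d ⟨hdμ, hd2⟩
  · intro a b hb
    have h1 : ¬(a = i0 ∧ b = p.part i0 - 1) := by
      rintro ⟨rfl, rfl⟩
      omega
    by_cases h2 : a = i0 ∧ b + 1 = p.part i0 - 1
    · unfold insertMax
      rw [if_neg h1, if_pos h2]
      have hbμ : b < (erase p i0).part a := by
        rw [h2.1, erase_part_self hcor]
        omega
      have := hbd a b hbμ
      omega
    · unfold insertMax
      rw [if_neg h1, if_neg h2]
      exact hrow a b ((hcell a (b+1)).mpr ⟨hb, h2⟩)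
  · intro a b hb
    have h2 : ¬(a = i0 ∧ b = p.part i0 - 1) := by
      rintro ⟨rfl, rfl⟩
      omega
    by_cases h1 : a + 1 = i0 ∧ b = p.part i0 - 1
    · unfold insertMax
      rw [if_neg h2, if_pos h1]
      have hbμ : b < (erase p i0).part a := by
        rw [erase_part_ne p (show a ≠ i0 by omega)]
        have := p.antitone' (show a ≤ i0 by omega)
        omega
      have := hbd a b hbμ
      omega
    · unfold insertMax
      rw [if_neg h2, if_neg h1]
      exact hcol a b ((hcell (a+1) b).mpr ⟨hb, h1⟩)

lemma insert_remove {p : YPart} {t : ℕ → ℕ → ℕ} (h : IsSYT p t) (hp : p ≠ ⊥) :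
    insertMax p (maxCell p t).1 (removeMax p t) = t := by
  funext a b
  unfold insertMax removeMax
  by_cases hc : a = (maxCell p t).1 ∧ b = p.part (maxCell p t).1 - 1
  · rw [if_pos hc, hc.1, hc.2]
    exact (maxCell_val h hp).symm
  · rw [if_neg hc, if_neg hc]

lemma maxCell_insert {p : YPart} {i0 : ℕ} (hcor : p.IsCorner i0) {t' : ℕ → ℕ → ℕ}
    (h : IsSYT (erase p i0) t') :
    maxCell p (insertMax p i0 t') = (i0, p.part i0 - 1) := by
  have hc' := hcor
  unfold IsCorner at hc'
  refine (maxCell_unique (isSYT_insertMax hcor h) (ne_bot_of_corner hcor)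
    (show p.part i0 - 1 < p.part i0 by omega) ?_).symm
  unfold insertMax
  rw [if_pos ⟨rfl, rfl⟩]

lemma remove_insert {p : YPart} {i0 : ℕ} (hcor : p.IsCorner i0) {t' : ℕ → ℕ → ℕ}
    (h : IsSYT (erase p i0) t') :
    removeMax p (insertMax p i0 t') = t' := by
  have hc' := hcor
  unfold IsCorner at hc'
  have hcv : t' i0 (p.part i0 - 1) = 0 := by
    apply h.1
    rw [erase_part_self hcor]
    omega
  funext a b
  unfold removeMax
  rw [maxCell_insert hcor h]
  simp only
  by_cases hc : a = i0 ∧ b = p.part i0 - 1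
  · rw [if_pos hc]
    unfold insertMax at *
    rw [hc.1, hc.2]
    exact hcv.symm
  · rw [if_neg hc]
    unfold insertMax
    rw [if_neg hc]

end YPart
end Chunk6
section Chunk7
namespace YPart

lemma flatten_range_ext (f : ℕ → List ℕ) (N M : ℕ) (hNM : N ≤ M)
    (hf : ∀ j, N ≤ j → f j = []) :
    ((List.range M).reverse.map f).flatten = ((List.range N).reverse.map f).flatten := by
  induction M, hNM using Nat.le_induction with
  | base => rfl
  | succ M hM ih =>
    rw [List.range_succ, List.reverse_append]
    show ((([M] : List ℕ).reverse ++ (List.range M).reverse).map f).flatten = _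
    rw [List.map_append, List.flatten_append]
    have : (([M] : List ℕ).reverse.map f).flatten = [] := by
      simp [hf M hM]
    rw [this, List.nil_append, ih]

lemma flatten_range_split (f : ℕ → List ℕ) (N i0 : ℕ) (h : i0 < N) :
    ((List.range N).reverse.map f).flatten
      = ((List.range' (i0+1) (N-(i0+1))).reverse.map f).flatten ++ f i0
        ++ ((List.range i0).reverse.map f).flatten := by
  have hsplit : List.range N = List.range (i0+1) ++ List.range' (i0+1) (N-(i0+1)) := by
    have h1 := List.range'_append (s := 0) (m := i0+1) (n := N-(i0+1)) (step := 1)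
    simp only [one_mul, zero_add] at h1
    have h2 : i0 + 1 + (N - (i0+1)) = N := by omega
    rw [h2] at h1
    rw [List.range_eq_range', List.range_eq_range']
    exact h1.symm
  rw [hsplit, List.reverse_append, List.map_append, List.flatten_append, List.range_succ,
    List.reverse_append, List.map_append, List.flatten_append]
  simp [List.append_assoc]

lemma readingWord_remove {p : YPart} {i0 : ℕ} (hcor : p.IsCorner i0) (t t' : ℕ → ℕ → ℕ)
    (hagree : ∀ a b, b < (erase p i0).part a → t' a b = t a b) :
    ∃ A B : List ℕ, readingWord p t = A ++ t i0 (p.part i0 - 1) :: B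
      ∧ readingWord (erase p i0) t' = A ++ B
      ∧ B.length = ∑ j ∈ Finset.range (i0+1), (erase p i0).part j := by
  have hc' := hcor
  unfold IsCorner at hc'
  set μ := erase p i0 with hμ
  set N := numRows p with hN
  have hi0N : i0 < N := by
    rw [hN, ← part_pos_iff]
    omega
  have hμN : numRows μ ≤ N := numRows_mono (erase_le p i0)
  set fp : ℕ → List ℕ := fun i => (List.range (p.part i)).reverse.map (t i) with hfp
  set fμ : ℕ → List ℕ := fun i => (List.range (μ.part i)).reverse.map (t' i) with hfμ
  have hwp : readingWord p t = ((List.range N).reverse.map fp).flatten := rfl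
  have hwμ : readingWord μ t' = ((List.range N).reverse.map fμ).flatten := by
    unfold readingWord
    refine (flatten_range_ext fμ (numRows μ) N hμN (fun j hj => ?_)).symm
    have hz : μ.part j = 0 := (part_eq_zero_iff μ j).mpr hj
    rw [hfμ]
    simp [hz]
  -- the parts above and below row i0 agree
  have hAeq : ((List.range' (i0+1) (N-(i0+1))).reverse.map fp).flatten
      = ((List.range' (i0+1) (N-(i0+1))).reverse.map fμ).flatten := by
    congr 1
    refine List.map_congr_left (fun j hj => ?_)
    rw [List.mem_reverse, List.mem_range'_1] at hj
    have hji : j ≠ i0 := by omega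
    have hpart : μ.part j = p.part j := erase_part_ne p hji
    show List.map (t j) (List.range (p.part j)).reverse
      = List.map (t' j) (List.range (μ.part j)).reverse
    rw [hpart]
    refine List.map_congr_left (fun b hb => ?_)
    rw [List.mem_reverse, List.mem_range] at hb
    exact (hagree j b (by rw [hpart]; exact hb)).symm
  have hCeq : ((List.range i0).reverse.map fp).flatten
      = ((List.range i0).reverse.map fμ).flatten := by
    congr 1
    refine List.map_congr_left (fun j hj => ?_)
    rw [List.mem_reverse, List.mem_range] at hj
    have hji : j ≠ i0 := by omega
    have hpart : μ.part j = p.part j := erase_part_ne p hji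
    show List.map (t j) (List.range (p.part j)).reverse
      = List.map (t' j) (List.range (μ.part j)).reverse
    rw [hpart]
    refine List.map_congr_left (fun b hb => ?_)
    rw [List.mem_reverse, List.mem_range] at hb
    exact (hagree j b (by rw [hpart]; exact hb)).symm
  -- row i0 of p splits off its last entry
  have hrowp : fp i0 = t i0 (p.part i0 - 1) :: fμ i0 := by
    have hp1 : p.part i0 = μ.part i0 + 1 := by
      rw [hμ, erase_part_self hcor]
      omega
    show List.map (t i0) (List.range (p.part i0)).reverse
      = t i0 (p.part i0 - 1) :: List.map (t' i0) (List.range (μ.part i0)).reverse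
    rw [hp1, List.range_succ, List.reverse_append, List.reverse_singleton,
      List.singleton_append, List.map_cons]
    have harg : μ.part i0 + 1 - 1 = μ.part i0 := by omega
    rw [harg]
    congr 1
    refine List.map_congr_left (fun b hb => ?_)
    rw [List.mem_reverse, List.mem_range] at hb
    exact (hagree i0 b hb).symm
  refine ⟨((List.range' (i0+1) (N-(i0+1))).reverse.map fμ).flatten,
    fμ i0 ++ ((List.range i0).reverse.map fμ).flatten, ?_, ?_, ?_⟩
  · rw [hwp, flatten_range_split fp N i0 hi0N, hAeq, hCeq, hrowp]
    simp [List.append_assoc]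
  · rw [hwμ, flatten_range_split fμ N i0 hi0N]
    simp [List.append_assoc]
  · rw [List.length_append]
    have hlrow : (fμ i0).length = μ.part i0 := by
      rw [hfμ]
      simp
    have hlC : (((List.range i0).reverse.map fμ).flatten).length
        = ∑ j ∈ Finset.range i0, μ.part j := by
      rw [List.length_flatten, List.map_map]
      have : (List.length ∘ fμ) = fun j => μ.part j := by
        funext j
        rw [hfμ]
        simp
      rw [this, List.map_reverse, List.sum_reverse, list_sum_range_eq]
    rw [hlrow, hlC, Finset.sum_range_succ]
    omega

end YPart
end Chunk7
section Chunk8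
namespace YPart

lemma wordSign_remove {p : YPart} {t : ℕ → ℕ → ℕ} (h : IsSYT p t) (hp : p ≠ ⊥) :
    wordSign (readingWord p t)
      = salpha (erase p (maxCell p t).1) p
        * wordSign (readingWord (erase p (maxCell p t).1) (removeMax p t)) := by
  obtain ⟨hsnd, hcor⟩ := maxCell_snd h hp
  have hmv := maxCell_val h hp
  set i0 := (maxCell p t).1 with hi0
  have hcell := erase_cell_iff hcor
  have hagree : ∀ a b, b < (erase p i0).part a → removeMax p t a b = t a b := by
    intro a b hb
    unfold removeMax
    rw [if_neg ((hcell a b).mp hb).2]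
  obtain ⟨A, B, h1, h2, h3⟩ := readingWord_remove hcor t (removeMax p t) hagree
  have hlt : ∀ x ∈ A ++ B, x < weight p := by
    intro x hx
    rw [← h2] at hx
    unfold readingWord at hx
    rw [List.mem_flatten] at hx
    obtain ⟨row, hrow, hxrow⟩ := hx
    rw [List.mem_map] at hrow
    obtain ⟨j, hj, rfl⟩ := hrow
    rw [List.mem_map] at hxrow
    obtain ⟨b, hb, rfl⟩ := hxrow
    rw [List.mem_reverse, List.mem_range] at hb
    rw [hagree j b hb]
    have hbp : b < p.part j := lt_of_lt_of_le hb (erase_le p i0 j)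
    have h4 := h.2.1 j b hbp
    have hne : t j b ≠ weight p := by
      intro hcv
      have heq := maxCell_unique h hp hbp hcv
      have ha : j = i0 := congrArg Prod.fst heq
      have hbb : b = (maxCell p t).2 := congrArg Prod.snd heq
      rw [hsnd] at hbb
      exact ((hcell j b).mp hb).2 ⟨ha, hbb⟩
    omega
  rw [h1, hmv, h2,
    wordSign_insert A B (weight p) (fun x hx => hlt x (List.mem_append_left _ hx))
      (fun x hx => hlt x (List.mem_append_right _ hx)),
    salpha_erase hcor, ← h3]

lemma syt_bot : {t : ℕ → ℕ → ℕ | IsSYT (⊥ : YPart) t} = {fun _ _ => 0} := by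
  ext t
  simp only [Set.mem_setOf_eq, Set.mem_singleton_iff]
  constructor
  · intro h
    funext a b
    exact h.1 a b (by simp)
  · rintro rfl
    refine ⟨fun i j _ => rfl, fun i j hj => absurd hj (by simp),
      fun m hm1 hm2 => ?_, fun i j hj => absurd hj (by simp),
      fun i j hj => absurd hj (by simp)⟩
    rw [weight_bot] at hm2
    omega

lemma syt_finite_aux : ∀ (n : ℕ) (p : YPart), weight p = n → {t | IsSYT p t}.Finite := by
  intro n
  induction n using Nat.strong_induction_on with
  | _ n ih =>
    intro p hw
    by_cases hp : p = ⊥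
    · subst hp
      rw [syt_bot]
      exact Set.finite_singleton _
    · have hsub : {t | IsSYT p t} ⊆
          ⋃ i ∈ {i | p.IsCorner i}, insertMax p i '' {t' | IsSYT (erase p i) t'} := by
        intro t ht
        have hcor := (maxCell_snd ht hp).2
        refine Set.mem_biUnion hcor ⟨removeMax p t, isSYT_removeMax ht hp, ?_⟩
        exact insert_remove ht hp
      refine Set.Finite.subset (Set.Finite.biUnion (corners_finite p) ?_) hsub
      intro i hi
      refine Set.Finite.image _ (ih (weight (erase p i)) ?_ _ rfl)
      have := weight_erase hi
      omega

lemma syt_finite (p : YPart) : {t | IsSYT p t}.Finite := syt_finite_aux (weight p) p rfl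

lemma numRows_bot : numRows (⊥ : YPart) = 0 := by
  have h := (part_eq_zero_iff (⊥ : YPart) 0).mp rfl
  omega

lemma imbalance_bot : imbalance (⊥ : YPart) = 1 := by
  unfold imbalance
  rw [syt_bot, finsum_mem_singleton]
  unfold readingWord
  rw [numRows_bot]
  show wordSign [] = 1
  unfold wordSign wordInversions
  simp

lemma imbalance_rec {p : YPart} (hp : p ≠ ⊥) :
    imbalance p = ∑ i ∈ corners p, salpha (erase p i) p * imbalance (erase p i) := by
  unfold imbalance
  rw [finsum_mem_eq_finite_toFinset_sum _ (syt_finite p)]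
  have step : ∑ t ∈ (syt_finite p).toFinset, wordSign (readingWord p t)
      = ∑ q ∈ (corners p).sigma (fun i => (syt_finite (erase p i)).toFinset),
          salpha (erase p q.1) p * wordSign (readingWord (erase p q.1) q.2) := by
    refine Finset.sum_nbij'
      (i := fun t => (⟨(maxCell p t).1, removeMax p t⟩ : Σ _ : ℕ, (ℕ → ℕ → ℕ)))
      (j := fun q => insertMax p q.1 q.2) ?_ ?_ ?_ ?_ ?_
    · intro t ht
      rw [Set.Finite.mem_toFinset] at ht
      rw [Finset.mem_sigma]
      exact ⟨mem_corners.mpr (maxCell_snd ht hp).2,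
        (Set.Finite.mem_toFinset _).mpr (isSYT_removeMax ht hp)⟩
    · intro q hq
      rw [Finset.mem_sigma] at hq
      rw [Set.Finite.mem_toFinset]
      exact isSYT_insertMax (mem_corners.mp hq.1) ((syt_finite (erase p q.1)).mem_toFinset.mp hq.2)
    · intro t ht
      rw [Set.Finite.mem_toFinset] at ht
      dsimp only
      exact insert_remove ht hp
    · intro q hq
      rw [Finset.mem_sigma] at hq
      obtain ⟨i, t'⟩ := q
      have hcor := mem_corners.mp hq.1
      have hsyt := (syt_finite (erase p i)).mem_toFinset.mp hq.2
      dsimp only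
      have h1 : (maxCell p (insertMax p i t')).1 = i := by rw [maxCell_insert hcor hsyt]
      have h2 : removeMax p (insertMax p i t') = t' := remove_insert hcor hsyt
      rw [h1, h2]
    · intro t ht
      rw [Set.Finite.mem_toFinset] at ht
      dsimp only
      exact wordSign_remove ht hp
  rw [step, Finset.sum_sigma]
  refine Finset.sum_congr rfl fun i hi => ?_
  rw [finsum_mem_eq_finite_toFinset_sum _ (syt_finite (erase p i)), Finset.mul_sum]

lemma e_alpha_eq_imbalance : ∀ (n : ℕ) (p : YPart), weight p = n →
    SDP.e YPart.salpha p = YPart.imbalance p := by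
  intro n
  induction n using Nat.strong_induction_on with
  | _ n ih =>
    intro p hw
    by_cases hp : p = ⊥
    · subst hp
      rw [SDP.e_bot, imbalance_bot]
    · rw [SDP.e_rec _ hp, imbalance_rec hp]
      refine Finset.sum_congr rfl fun i hi => ?_
      have hcor := mem_corners.mp hi
      rw [ih (weight (erase p i)) (by have := weight_erase hcor; omega) _ rfl]

end YPart
end Chunk8
/-- for every partition `λ`, `e_α(λ) = I_λ` and `e_β(λ) = a(λ)·I_λ`. -/
theorem statement14 (p : YPart) :
    SDP.e YPart.salpha p = YPart.imbalance p ∧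
    SDP.e YPart.sbeta p = YPart.aSign p * YPart.imbalance p := by
  constructor
  · exact YPart.e_alpha_eq_imbalance (YPart.weight p) p rfl
  · rw [SDP.e_sbeta, YPart.e_alpha_eq_imbalance (YPart.weight p) p rfl]
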